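/- arXiv:0902.1744 — 2 statements merged into one kernel-verified Lean document; each statement's English description precedes it below -/
import Mathlib

section
/- For all integers λ1, λ2, β1, β2 with λ1 ≥ 0, λ2 ≥ 0, −λ1 − λ2 + β2 ≥ 0, −λ1 + β1 − β2 ≥ 0 and λ1 + 2λ2 − β1 ≥ 0, one has N(λ1, λ2, β1, β2) = 3/4 + (3/4)λ1² + λ1λ2 + λ2 + (3/2)λ1 − (1/2)λ1β1 + (1/8)(−1)^{β1} − (1/2)β1 + (1/8)(−1)^{β1+λ1}. -/
/-- The number of quadruples `(a22, a11, a12, a13)` of nonnegative integers satisfying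
Littelmann's inequalities for `so₅(ℂ)` together with the weight equations
`a22 + a12 = β1` and `a11 + a13 = β2`.  By Littelmann's results this is the dimension of
the weight space of weight `λ1·ω1 + λ2·ω2 − β1·α1 − β2·α2` in the irreducible
`so₅(ℂ)`-module of highest weight `λ1·ω1 + λ2·ω2`. -/
noncomputable def weightMult (l1 l2 b1 b2 : ℤ) : ℕ :=
  Set.ncard {a : ℤ × ℤ × ℤ × ℤ |
    0 ≤ a.1 ∧ 0 ≤ a.2.1 ∧ 0 ≤ a.2.2.1 ∧ 0 ≤ a.2.2.2 ∧
    2 * a.2.1 ≥ a.2.2.1 ∧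
    a.2.2.1 ≥ 2 * a.2.2.2 ∧
    a.2.2.2 ≤ l2 ∧
    a.2.2.1 ≤ l1 + 2 * a.2.2.2 ∧
    a.2.1 ≤ l2 + a.2.2.1 - 2 * a.2.2.2 ∧
    a.1 ≤ l1 + 2 * a.2.1 - 2 * a.2.2.1 + 2 * a.2.2.2 ∧
    a.1 + a.2.2.1 = b1 ∧
    a.2.1 + a.2.2.2 = b2}


lemma sum_aux (C D : ℤ) : ∀ n : ℤ, 0 ≤ n →
    8 * ∑ u ∈ Finset.Icc (0:ℤ) n, ((C - u)/2 + u + D) =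
      2*C^2 - 2*(C % 2) - 2*(C - n - 1)^2 + 2*((C - n - 1) % 2)
        + 4*n*(n+1) + 8*(n+1)*D := by
  refine Int.le_induction ?_ ?_
  · rw [Finset.Icc_self, Finset.sum_singleton]
    have h8 : 8*((C - 0)/2) = 4*C - 4*(C % 2) := by omega
    have hm : (C - 0 - 1) % 2 = 1 - C % 2 := by omega
    have hsq : C^2 - (C - 0 - 1)^2 = 2*C - 1 := by ring
    linarith [h8, hm, hsq]
  · intro n hn IH
    have hins : Finset.Icc (0:ℤ) (n+1) = insert (n+1) (Finset.Icc 0 n) := by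
      ext x; simp only [Finset.mem_Icc, Finset.mem_insert]; omega
    have hnot : (n+1) ∉ Finset.Icc (0:ℤ) n := by
      simp only [Finset.mem_Icc]; omega
    rw [hins, Finset.sum_insert hnot]
    have e1 : C - (n+1) = C - n - 1 := by ring
    rw [e1]
    have h8 : 8*((C - n - 1)/2) = 4*(C - n - 1) - 4*((C - n - 1) % 2) := by omega
    have hm : (C - n - 1 - 1) % 2 = 1 - (C - n - 1) % 2 := by omega
    have hsq : (C - n - 1)^2 - (C - n - 1 - 1)^2 = 2*C - 2*n - 3 := by ring
    linarith [IH, h8, hm, hsq]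

theorem weightMult_aux (l1 l2 b1 b2 : ℤ)
    (h0 : 0 ≤ l1) (h1 : 0 ≤ l2)
    (h2 : 0 ≤ -l1 - l2 + b2) (h3 : 0 ≤ -l1 + b1 - b2) (h4 : 0 ≤ l1 + 2*l2 - b1) :
    (Set.ncard {a : ℤ × ℤ × ℤ × ℤ |
      0 ≤ a.1 ∧ 0 ≤ a.2.1 ∧ 0 ≤ a.2.2.1 ∧ 0 ≤ a.2.2.2 ∧
      2 * a.2.1 ≥ a.2.2.1 ∧
      a.2.2.1 ≥ 2 * a.2.2.2 ∧
      a.2.2.2 ≤ l2 ∧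
      a.2.2.1 ≤ l1 + 2 * a.2.2.2 ∧
      a.2.1 ≤ l2 + a.2.2.1 - 2 * a.2.2.2 ∧
      a.1 ≤ l1 + 2 * a.2.1 - 2 * a.2.2.1 + 2 * a.2.2.2 ∧
      a.1 + a.2.2.1 = b1 ∧
      a.2.1 + a.2.2.2 = b2} : ℤ) =
    ∑ u ∈ Finset.Icc (0:ℤ) l1, ((l1 + 2*b2 - b1 - u)/2 + u + (l2 + 1 - b2)) := by
  classical
  set T : ℤ → Finset (ℤ × ℤ × ℤ × ℤ) := fun u =>
    (Finset.Icc (b2 - l2 - u) ((l1 + 2*b2 - b1 - u)/2)).image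
      (fun y => (b1 - u - 2*y, b2 - y, u + 2*y, y)) with hT
  have hset : {a : ℤ × ℤ × ℤ × ℤ |
      0 ≤ a.1 ∧ 0 ≤ a.2.1 ∧ 0 ≤ a.2.2.1 ∧ 0 ≤ a.2.2.2 ∧
      2 * a.2.1 ≥ a.2.2.1 ∧
      a.2.2.1 ≥ 2 * a.2.2.2 ∧
      a.2.2.2 ≤ l2 ∧
      a.2.2.1 ≤ l1 + 2 * a.2.2.2 ∧
      a.2.1 ≤ l2 + a.2.2.1 - 2 * a.2.2.2 ∧
      a.1 ≤ l1 + 2 * a.2.1 - 2 * a.2.2.1 + 2 * a.2.2.2 ∧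
      a.1 + a.2.2.1 = b1 ∧
      a.2.1 + a.2.2.2 = b2} = ↑((Finset.Icc (0:ℤ) l1).biUnion T) := by
    ext ⟨a, b, c, d⟩
    simp only [Set.mem_setOf_eq, Finset.coe_biUnion, Finset.mem_coe, Finset.mem_Icc,
      Set.mem_iUnion, hT, Finset.mem_image, Prod.mk.injEq]
    constructor
    · rintro ⟨ha, hb, hc, hd, g1, g2, g3, g4, g5, g6, g7, g8⟩
      exact ⟨c - 2*d, ⟨by omega, by omega⟩, d, by omega, by omega, by omega, by omega, rfl⟩
    · rintro ⟨u, ⟨hu0, hu1⟩, y, ⟨hy0, hy1⟩, e1, e2, e3, e4⟩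
      subst e1; subst e2; subst e3; subst e4
      refine ⟨by omega, by omega, by omega, by omega, by omega, by omega, by omega,
        by omega, by omega, by omega, by omega, by omega⟩
  rw [hset, Set.ncard_coe_finset]
  rw [Finset.card_biUnion]
  · have hfib : ∀ u ∈ Finset.Icc (0:ℤ) l1,
        ((T u).card : ℤ) = (l1 + 2*b2 - b1 - u)/2 + u + (l2 + 1 - b2) := by
      intro u hu
      simp only [Finset.mem_Icc] at hu
      rw [hT]
      rw [Finset.card_image_of_injOn (fun x _ y _ h => by
        simpa using congrArg (fun p : ℤ × ℤ × ℤ × ℤ => p.2.2.2) h)]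
      rw [Int.card_Icc]
      have hge : 0 ≤ (l1 + 2*b2 - b1 - u)/2 + 1 - (b2 - l2 - u) := by omega
      rw [Int.toNat_of_nonneg hge]
      ring
    push_cast
    rw [Finset.sum_congr rfl hfib]
  · intro x hx y hy hxy
    simp only [Finset.disjoint_left, hT, Finset.mem_image]
    rintro a ⟨s, hs, rfl⟩ ⟨t, ht, he⟩
    simp only [Prod.mk.injEq] at he
    omega

theorem weightMult_on_cone_f26 (l1 l2 b1 b2 : ℤ)
    (h0 : 0 ≤ l1)
    (h1 : 0 ≤ l2)
    (h2 : 0 ≤ -l1 - l2 + b2)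
    (h3 : 0 ≤ -l1 + b1 - b2)
    (h4 : 0 ≤ l1 + 2*l2 - b1) :
    (weightMult l1 l2 b1 b2 : ℚ) = 3/4 + (3/4)*l1^2 + l1*l2 + l2 + (3/2)*l1 - (1/2)*l1*b1 + (1/8)*(-1 : ℚ)^b1 - (1/2)*b1 + (1/8)*(-1 : ℚ)^(b1 + l1) := by
  have hZ : (weightMult l1 l2 b1 b2 : ℤ) =
      ∑ u ∈ Finset.Icc (0:ℤ) l1, ((l1 + 2*b2 - b1 - u)/2 + u + (l2 + 1 - b2)) := by
    rw [weightMult]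
    exact weightMult_aux l1 l2 b1 b2 h0 h1 h2 h3 h4
  have h8 := sum_aux (l1 + 2*b2 - b1) (l2 + 1 - b2) l1 h0
  rw [← hZ] at h8
  rcases Int.even_or_odd b1 with hb | hb <;> rcases Int.even_or_odd l1 with hl | hl
  · have e1 : ((-1 : ℚ))^b1 = 1 := Even.neg_one_zpow hb
    have e2 : ((-1 : ℚ))^(b1 + l1) = 1 := Even.neg_one_zpow (hb.add hl)
    rw [e1, e2]
    obtain ⟨p, hp⟩ := hb; obtain ⟨q, hq⟩ := hl
    have m1 : (l1 + 2*b2 - b1) % 2 = 0 := by omega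
    have m2 : (l1 + 2*b2 - b1 - l1 - 1) % 2 = 1 := by omega
    rw [m1, m2] at h8
    have hQ := congrArg (fun x : ℤ => (x : ℚ)) h8
    push_cast at hQ
    linear_combination hQ / 8
  · have e1 : ((-1 : ℚ))^b1 = 1 := Even.neg_one_zpow hb
    have e2 : ((-1 : ℚ))^(b1 + l1) = -1 := Odd.neg_one_zpow (hb.add_odd hl)
    rw [e1, e2]
    obtain ⟨p, hp⟩ := hb; obtain ⟨q, hq⟩ := hl
    have m1 : (l1 + 2*b2 - b1) % 2 = 1 := by omega
    have m2 : (l1 + 2*b2 - b1 - l1 - 1) % 2 = 1 := by omega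
    rw [m1, m2] at h8
    have hQ := congrArg (fun x : ℤ => (x : ℚ)) h8
    push_cast at hQ
    linear_combination hQ / 8
  · have e1 : ((-1 : ℚ))^b1 = -1 := Odd.neg_one_zpow hb
    have e2 : ((-1 : ℚ))^(b1 + l1) = -1 := Odd.neg_one_zpow (hb.add_even hl)
    rw [e1, e2]
    obtain ⟨p, hp⟩ := hb; obtain ⟨q, hq⟩ := hl
    have m1 : (l1 + 2*b2 - b1) % 2 = 1 := by omega
    have m2 : (l1 + 2*b2 - b1 - l1 - 1) % 2 = 0 := by omega
    rw [m1, m2] at h8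
    have hQ := congrArg (fun x : ℤ => (x : ℚ)) h8
    push_cast at hQ
    linear_combination hQ / 8
  · have e1 : ((-1 : ℚ))^b1 = -1 := Odd.neg_one_zpow hb
    have e2 : ((-1 : ℚ))^(b1 + l1) = 1 := Even.neg_one_zpow (hb.add_odd hl)
    rw [e1, e2]
    obtain ⟨p, hp⟩ := hb; obtain ⟨q, hq⟩ := hl
    have m1 : (l1 + 2*b2 - b1) % 2 = 0 := by omega
    have m2 : (l1 + 2*b2 - b1 - l1 - 1) % 2 = 0 := by omega
    rw [m1, m2] at h8
    have hQ := congrArg (fun x : ℤ => (x : ℚ)) h8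
    push_cast at hQ
    linear_combination hQ / 8
end

section
/- For all integers λ1, λ2, β1, β2 with λ1 ≥ 0, λ2 ≥ 0, −λ1 − 2λ2 + β1 ≥ 0, −λ1 + β1 − β2 ≥ 0, 2λ1 + 2λ2 − β1 ≥ 0 and −λ1 − λ2 + β2 ≥ 0, one has N(λ1, λ2, β1, β2) = 7/8 + λ2² + λ1² + 2λ1λ2 + 2λ2 + 2λ1 − β1 + (1/4)β1² − λ2β1 − λ1β1 + (1/8)(−1)^{β1}. -/
/-!
Eliminating `a22` and `a11` through the weight equations leaves the pairs `(a12, a13)`. On this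
cone the substitution `u = a13 - (β2 - λ1 - λ2)`, `v = a12 - a13 - (β2 - λ2)` turns Littelmann's
inequalities into exactly `0 ≤ v ≤ u`, `u + v ≤ n` with `n = 2λ1 + 2λ2 - β1`, the other ones
becoming redundant. This triangle has `⌊(n + 2)² / 4⌋` lattice points, one for each `v ≤ m / 2`
on each antidiagonal `u + v = m ≤ n`, and that is the quasi-polynomial of the statement.
-/

open Finset

def triangle (n : ℕ) : Finset (ℕ × ℕ) :=
  (range (n + 1) ×ˢ range (n + 1)).filter fun p => p.2 ≤ p.1 ∧ p.1 + p.2 ≤ n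

def halfAntidiagonal (m : ℕ) : Finset (ℕ × ℕ) :=
  (antidiagonal m).filter fun p => p.2 ≤ p.1

lemma card_halfAntidiagonal (m : ℕ) : #(halfAntidiagonal m) = m / 2 + 1 := by
  have hinj : Function.Injective fun v : ℕ => (m - v, v) := fun _ _ h => congrArg Prod.snd h
  rw [← Finset.card_range (m / 2 + 1), ← card_image_of_injective _ hinj]
  congr 1
  ext ⟨u, v⟩
  simp only [halfAntidiagonal, mem_filter, HasAntidiagonal.mem_antidiagonal, mem_image, mem_range,
    Prod.mk.injEq]
  constructor
  · rintro ⟨hsum, hvu⟩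
    exact ⟨v, by omega, by omega, rfl⟩
  · rintro ⟨w, hw, rfl, rfl⟩
    omega

lemma triangle_eq_biUnion (n : ℕ) : triangle n = (range (n + 1)).biUnion halfAntidiagonal := by
  ext ⟨u, v⟩
  simp only [triangle, halfAntidiagonal, mem_filter, mem_product, mem_range, mem_biUnion,
    HasAntidiagonal.mem_antidiagonal]
  constructor
  · rintro ⟨-, hvu, hsum⟩
    exact ⟨u + v, by omega, rfl, hvu⟩
  · rintro ⟨m, hm, hsum, hvu⟩
    omega

lemma four_mul_sum_range_half_add_one (n : ℕ) :
    4 * ∑ m ∈ range (n + 1), (m / 2 + 1) + n % 2 = (n + 2) ^ 2 := by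
  induction n with
  | zero => rfl
  | succ n ih =>
    rw [sum_range_succ, show (n + 1 + 2) ^ 2 = (n + 2) ^ 2 + 2 * n + 5 by ring, ← ih]
    omega

lemma card_triangle (n : ℕ) : 4 * #(triangle n) + n % 2 = (n + 2) ^ 2 := by
  have hdisj : (range (n + 1) : Set ℕ).PairwiseDisjoint halfAntidiagonal :=
    fun _ _ _ _ hne => disjoint_left.2 fun _ hpa hpb =>
      hne ((HasAntidiagonal.mem_antidiagonal.1 (mem_filter.1 hpa).1).symm.trans
        (HasAntidiagonal.mem_antidiagonal.1 (mem_filter.1 hpb).1))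
  rw [triangle_eq_biUnion, card_biUnion hdisj]
  simp only [card_halfAntidiagonal]
  exact four_mul_sum_range_half_add_one n

lemma card_triangle_two_mul (p : ℕ) : #(triangle (2 * p)) = (p + 1) ^ 2 := by
  have h := card_triangle (2 * p)
  rw [Nat.mul_mod_right] at h
  nlinarith

lemma card_triangle_two_mul_add_one (p : ℕ) : #(triangle (2 * p + 1)) = (p + 1) * (p + 2) := by
  have h := card_triangle (2 * p + 1)
  rw [Nat.mul_add_mod_self_left] at h
  nlinarith

lemma weightMult_eq_card_triangle {l1 l2 b1 b2 : ℤ} (h2 : 0 ≤ -l1 - 2*l2 + b1)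
    (h3 : 0 ≤ -l1 + b1 - b2) (h4 : 0 ≤ 2*l1 + 2*l2 - b1) (h5 : 0 ≤ -l1 - l2 + b2) :
    weightMult l1 l2 b1 b2 = #(triangle (2*l1 + 2*l2 - b1).toNat) := by
  set f : ℕ × ℕ → ℤ × ℤ × ℤ × ℤ := fun p =>
    (b1 - (p.2 + p.1 + 2*b2 - 2*l2 - l1), l1 + l2 - p.1, p.2 + p.1 + 2*b2 - 2*l2 - l1,
      p.1 + b2 - l1 - l2)
  have hf : Function.Injective f := by
    rintro ⟨u, v⟩ ⟨u', v'⟩ h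
    simp only [f, Prod.mk.injEq] at h
    ext <;> omega
  rw [← card_image_of_injective _ hf, ← Set.ncard_coe_finset, weightMult]
  congr 1
  ext ⟨a22, a11, a12, a13⟩
  simp only [Set.mem_ofPred_eq, coe_image, Set.mem_image, mem_coe, triangle, mem_filter,
    mem_product, mem_range, f, Prod.exists, Prod.mk.injEq]
  constructor
  · rintro ⟨-, -, -, -, -, -, -, hvu, hv, hsum, hb1, hb2⟩
    exact ⟨(a13 - (b2 - l1 - l2)).toNat, (a12 - a13 - (b2 - l2)).toNat,
      ⟨⟨by omega, by omega⟩, by omega, by omega⟩, by omega, by omega, by omega, by omega⟩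
  · rintro ⟨u, v, ⟨-, hvu, hsum⟩, rfl, rfl, rfl, rfl⟩
    omega

theorem weightMult_on_cone_f31_general (l1 l2 b1 b2 : ℤ)
    (h2 : 0 ≤ -l1 - 2*l2 + b1)
    (h3 : 0 ≤ -l1 + b1 - b2)
    (h4 : 0 ≤ 2*l1 + 2*l2 - b1)
    (h5 : 0 ≤ -l1 - l2 + b2) :
    (weightMult l1 l2 b1 b2 : ℚ) = 7/8 + l2^2 + l1^2 + 2*l1*l2 + 2*l2 + 2*l1 - b1 + (1/4)*b1^2 - l2*b1 - l1*b1 + (1/8)*(-1 : ℚ)^b1 := by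
  rw [weightMult_eq_card_triangle h2 h3 h4 h5]
  rcases Int.even_or_odd' b1 with ⟨c, rfl | rfl⟩
  · have hn : (2*l1 + 2*l2 - 2*c).toNat = 2 * (l1 + l2 - c).toNat := by omega
    have hp : ((l1 + l2 - c).toNat : ℚ) = l1 + l2 - c := by
      exact_mod_cast Int.toNat_of_nonneg (by omega : 0 ≤ l1 + l2 - c)
    rw [hn, card_triangle_two_mul, Even.neg_one_zpow ⟨c, two_mul c⟩]
    push_cast [hp]
    ring
  · have hn : (2*l1 + 2*l2 - (2*c + 1)).toNat = 2 * (l1 + l2 - c - 1).toNat + 1 := by omega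
    have hp : ((l1 + l2 - c - 1).toNat : ℚ) = l1 + l2 - c - 1 := by
      exact_mod_cast Int.toNat_of_nonneg (by omega : 0 ≤ l1 + l2 - c - 1)
    rw [hn, card_triangle_two_mul_add_one, Odd.neg_one_zpow ⟨c, rfl⟩]
    push_cast [hp]
    ring

theorem weightMult_on_cone_f31 (l1 l2 b1 b2 : ℤ)
    (h0 : 0 ≤ l1)
    (h1 : 0 ≤ l2)
    (h2 : 0 ≤ -l1 - 2*l2 + b1)
    (h3 : 0 ≤ -l1 + b1 - b2)
    (h4 : 0 ≤ 2*l1 + 2*l2 - b1)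
    (h5 : 0 ≤ -l1 - l2 + b2) :
    (weightMult l1 l2 b1 b2 : ℚ) = 7/8 + l2^2 + l1^2 + 2*l1*l2 + 2*l2 + 2*l1 - b1 + (1/4)*b1^2 - l2*b1 - l1*b1 + (1/8)*(-1 : ℚ)^b1 :=
  weightMult_on_cone_f31_general l1 l2 b1 b2 h2 h3 h4 h5
end
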